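/- arXiv:1410.4785 — 2 statements merged into one kernel-verified Lean document; each statement's English description precedes it below -/
import Mathlib

section
/- Let m ≥ 3. For distinct a, b ∈ V = 𝔽₂^{2m}, let π_{a,b} be the permutation of V given by p ↦ t_{a+b}(p) + (1 + φ(a,b))·(a+b). Then the subgroup of Sym(V) generated by all the permutations π_{a,b} equals the group of all affine symplectic transformations of V, i.e. the set of permutations of the form p ↦ g(p) + w where w ∈ V and g is an 𝔽₂-linear automorphism of V with φ(g(u), g(v)) = φ(u,v) for all u, v. (This is the group L(D^a) ≅ 2^{2m}.Sp_{2m}(2) of move sequences of the design D^a, since the elementary move [a,b] is the permutation π_{a,b}.) -/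
open Matrix

/-- Row vectors in `𝔽₂^{2m}`, with coordinates indexed by `Fin m ⊕ Fin m`
(the first block and the second block of `m` coordinates). -/
abbrev Vm (m : ℕ) := (Fin m ⊕ Fin m) → ZMod 2

/-- The block matrix `e = (0 Iₘ; 0 0)`. -/
def eMat (m : ℕ) : Matrix (Fin m ⊕ Fin m) (Fin m ⊕ Fin m) (ZMod 2) :=
  Matrix.fromBlocks 0 1 0 0

/-- The block matrix `f = e + eᵀ = (0 Iₘ; Iₘ 0)`. -/
def fMat (m : ℕ) : Matrix (Fin m ⊕ Fin m) (Fin m ⊕ Fin m) (ZMod 2) :=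
  eMat m + (eMat m)ᵀ

/-- The alternating bilinear form `φ(u,v) = u f vᵀ`. -/
def phi (m : ℕ) (u v : Vm m) : ZMod 2 := u ⬝ᵥ (fMat m).mulVec v

/-- The quadratic form `θ₀(u) = u e uᵀ`. -/
def theta0 (m : ℕ) (u : Vm m) : ZMod 2 := u ⬝ᵥ (eMat m).mulVec u

/-- The quadratic form `θ_a(u) = θ₀(u) + φ(u,a)`. -/
def theta (m : ℕ) (a u : Vm m) : ZMod 2 := theta0 m u + phi m u a

/-- The transvection `t_c : u ↦ u + φ(u,c)·c`. -/
def tvec (m : ℕ) (c u : Vm m) : Vm m := u + phi m u c • c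

/-- The elementary move `[a,b]` of the design `D^a`:
`p ↦ t_{a+b}(p) + (1 + φ(a,b))·(a+b)`. -/
def piMove (m : ℕ) (a b p : Vm m) : Vm m :=
  tvec m (a + b) p + (1 + phi m a b) • (a + b)

/-!
A move `[a, b]` is the transvection `t_{a+b}` followed by a translation, so every move is affine
symplectic. Conversely `[z, z + c]` with `φ(z, c) = 1` is `t_c`, and `[0, w]` is `t_w` followed
by the translation by `w`; so it suffices that transvections generate every permutation of `V`
preserving `φ`. Transvections along a subspace on which `φ` is nondegenerate act transitively
on its nonzero vectors, and on the vectors `w` with `φ(u, w) = 1` while fixing `u`. Hence a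
`φ`-preserving permutation can be corrected, one hyperbolic pair `(eᵢ, fᵢ)` at a time and by
transvections orthogonal to the pairs already fixed, until it fixes all of them; it is then the
identity, since the values `φ(eᵢ, v)`, `φ(fᵢ, v)` determine `v`.
-/

open Equiv

section

variable {m : ℕ}

lemma zmod_two_eq_zero_or_eq_one (x : ZMod 2) : x = 0 ∨ x = 1 := by
  revert x; decide

lemma vec_add_self (v : Vm m) : v + v = 0 :=
  funext fun j => CharTwo.add_self_eq_zero (v j)

lemma phi_apply (u v : Vm m) :
    phi m u v = ∑ i : Fin m, (u (.inl i) * v (.inr i) + u (.inr i) * v (.inl i)) := by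
  simp [phi, fMat, eMat, mulVec, dotProduct, Fintype.sum_sum_type, fromBlocks,
    Matrix.one_apply, mul_comm, Finset.sum_add_distrib]

lemma phi_comm (u v : Vm m) : phi m u v = phi m v u := by
  simp only [phi_apply, mul_comm, add_comm]

lemma phi_self (u : Vm m) : phi m u u = 0 := by
  simp [phi_apply, mul_comm, CharTwo.add_self_eq_zero]

lemma phi_add_left (u u' v : Vm m) : phi m (u + u') v = phi m u v + phi m u' v := by
  simp [phi, add_dotProduct]

lemma phi_add_right (u v v' : Vm m) : phi m u (v + v') = phi m u v + phi m u v' := by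
  simp [phi, mulVec_add, dotProduct_add]

lemma phi_smul_left (r : ZMod 2) (u v : Vm m) : phi m (r • u) v = r * phi m u v := by
  simp [phi, smul_dotProduct]

lemma phi_smul_right (r : ZMod 2) (u v : Vm m) : phi m u (r • v) = r * phi m u v := by
  simp [phi, mulVec_smul, dotProduct_smul]

lemma phi_zero_left (v : Vm m) : phi m 0 v = 0 := by simp [phi]

def eVec (i : Fin m) : Vm m := Pi.single (.inl i) 1

def fVec (i : Fin m) : Vm m := Pi.single (.inr i) 1

lemma phi_eVec (i : Fin m) (v : Vm m) : phi m (eVec i) v = v (.inr i) := by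
  simp [phi_apply, eVec, Pi.single_apply]

lemma phi_fVec (i : Fin m) (v : Vm m) : phi m (fVec i) v = v (.inl i) := by
  simp [phi_apply, fVec, Pi.single_apply]

lemma phi_eVec_fVec (i : Fin m) : phi m (eVec i) (fVec i) = 1 := by
  simp [phi_eVec, fVec]

lemma eq_of_phi_eVec_of_phi_fVec {v w : Vm m} (he : ∀ i, phi m (eVec i) v = phi m (eVec i) w)
    (hf : ∀ i, phi m (fVec i) v = phi m (fVec i) w) : v = w := by
  funext j
  rcases j with i | i
  · simpa [phi_fVec] using hf i
  · simpa [phi_eVec] using he i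

lemma tvec_of_phi_eq_zero {c u : Vm m} (h : phi m u c = 0) : tvec m c u = u := by
  simp [tvec, h]

lemma tvec_of_phi_eq_one {c u : Vm m} (h : phi m u c = 1) : tvec m c u = u + c := by
  simp [tvec, h]

lemma tvec_add_of_phi_eq_one {u v : Vm m} (h : phi m u v = 1) : tvec m (u + v) u = v := by
  rw [tvec_of_phi_eq_one (by rw [phi_add_right, phi_self, zero_add, h]), ← add_assoc,
    vec_add_self, zero_add]

lemma tvec_involutive (c : Vm m) : Function.Involutive (tvec m c) := fun u => by
  simp [tvec, phi_add_left, phi_smul_left, phi_self, add_assoc, vec_add_self]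

lemma phi_tvec_tvec (c u v : Vm m) : phi m (tvec m c u) (tvec m c v) = phi m u v := by
  simp only [tvec, phi_add_left, phi_add_right, phi_smul_left, phi_smul_right, phi_self,
    phi_comm c v, mul_zero, add_zero]
  rw [add_assoc, mul_comm (phi m u c), CharTwo.add_self_eq_zero, add_zero]

lemma isLinearMap_tvec (c : Vm m) : IsLinearMap (ZMod 2) (tvec m c) where
  map_add u v := by simp only [tvec, phi_add_left, add_smul]; abel
  map_smul r u := by simp only [tvec, phi_smul_left, smul_add, smul_smul]

def transvectionPerm (c : Vm m) : Perm (Vm m) := (tvec_involutive c).toPerm _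

@[simp]
lemma transvectionPerm_apply (c u : Vm m) : transvectionPerm c u = tvec m c u := rfl

def symplecticPerms (m : ℕ) : Subgroup (Perm (Vm m)) where
  carrier := {g | ∀ u v, phi m (g u) (g v) = phi m u v}
  mul_mem' hg hh u v := (hg _ _).trans (hh u v)
  one_mem' _ _ := rfl
  inv_mem' {g} hg u v := by simpa using (hg (g⁻¹ u) (g⁻¹ v)).symm

def transvectionGroup (W : AddSubgroup (Vm m)) : Subgroup (Perm (Vm m)) :=
  Subgroup.closure (transvectionPerm '' W)

lemma transvectionPerm_mem_transvectionGroup {W : AddSubgroup (Vm m)} {c : Vm m} (hc : c ∈ W) :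
    transvectionPerm c ∈ transvectionGroup W :=
  Subgroup.subset_closure ⟨c, hc, rfl⟩

lemma transvectionGroup_mono {W W' : AddSubgroup (Vm m)} (h : W ≤ W') :
    transvectionGroup W ≤ transvectionGroup W' :=
  Subgroup.closure_mono (Set.image_mono h)

lemma transvectionGroup_le_symplecticPerms (W : AddSubgroup (Vm m)) :
    transvectionGroup W ≤ symplecticPerms m :=
  (Subgroup.closure_le _).mpr <| by rintro _ ⟨c, -, rfl⟩; exact phi_tvec_tvec c

lemma transvectionGroup_le_stabilizer {W : AddSubgroup (Vm m)} {u : Vm m}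
    (hu : ∀ c ∈ W, phi m u c = 0) :
    transvectionGroup W ≤ MulAction.stabilizer (Perm (Vm m)) u :=
  (Subgroup.closure_le _).mpr <| by
    rintro _ ⟨c, hc, rfl⟩
    exact tvec_of_phi_eq_zero (hu c hc)

section Transitivity

variable {W : AddSubgroup (Vm m)}

lemma exists_phi_eq_one_phi_eq_one (hW : ∀ v ∈ W, v ≠ 0 → ∃ z ∈ W, phi m v z = 1)
    {u v : Vm m} (hu : u ∈ W) (hv : v ∈ W) (hu0 : u ≠ 0) (hv0 : v ≠ 0) :
    ∃ z ∈ W, phi m u z = 1 ∧ phi m v z = 1 := by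
  obtain ⟨zu, hzuW, hzu⟩ := hW u hu hu0
  obtain ⟨zv, hzvW, hzv⟩ := hW v hv hv0
  rcases zmod_two_eq_zero_or_eq_one (phi m v zu) with h₁ | h₁
  · rcases zmod_two_eq_zero_or_eq_one (phi m u zv) with h₂ | h₂
    · refine ⟨zu + zv, add_mem hzuW hzvW, ?_, ?_⟩
      · rw [phi_add_right, hzu, h₂, add_zero]
      · rw [phi_add_right, h₁, hzv, zero_add]
    · exact ⟨zv, hzvW, h₂, hzv⟩
  · exact ⟨zu, hzuW, hzu, h₁⟩

lemma exists_mem_transvectionGroup_apply_eq (hW : ∀ v ∈ W, v ≠ 0 → ∃ z ∈ W, phi m v z = 1)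
    {u v : Vm m} (hu : u ∈ W) (hv : v ∈ W) (hu0 : u ≠ 0) (hv0 : v ≠ 0) :
    ∃ τ ∈ transvectionGroup W, τ u = v := by
  rcases zmod_two_eq_zero_or_eq_one (phi m u v) with h | h
  · obtain ⟨z, hzW, huz, hvz⟩ := exists_phi_eq_one_phi_eq_one hW hu hv hu0 hv0
    refine ⟨transvectionPerm (z + v) * transvectionPerm (u + z),
      mul_mem (transvectionPerm_mem_transvectionGroup (add_mem hzW hv))
        (transvectionPerm_mem_transvectionGroup (add_mem hu hzW)), ?_⟩
    simp only [Perm.mul_apply, transvectionPerm_apply]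
    rw [tvec_add_of_phi_eq_one huz, tvec_add_of_phi_eq_one (by rwa [phi_comm])]
  · exact ⟨transvectionPerm (u + v), transvectionPerm_mem_transvectionGroup (add_mem hu hv),
      tvec_add_of_phi_eq_one h⟩

lemma exists_mem_transvectionGroup_fix_apply_eq {u w w' : Vm m} (hu : u ∈ W) (hw : w ∈ W)
    (hw' : w' ∈ W) (h : phi m u w = 1) (h' : phi m u w' = 1) :
    ∃ τ ∈ transvectionGroup W, τ u = u ∧ τ w = w' := by
  rcases zmod_two_eq_zero_or_eq_one (phi m w w') with hww' | hww'
  · -- `t_{w + w'}` fixes `w`; go through `w' + u` instead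
    have hwu : phi m w (w' + u) = 1 := by rw [phi_add_right, hww', phi_comm, h, zero_add]
    have hu' : phi m (w' + u) w' = 1 := by rw [phi_add_left, phi_self, h', zero_add]
    have hu₁ : phi m u (w + (w' + u)) = 0 := by
      simp only [phi_add_right, h, h', phi_self]
      decide
    have hu₂ : phi m u (w' + u + w') = 0 := by
      simp only [phi_add_right, h', phi_self]
      decide
    refine ⟨transvectionPerm (w' + u + w') * transvectionPerm (w + (w' + u)),
      mul_mem (transvectionPerm_mem_transvectionGroup (add_mem (add_mem hw' hu) hw'))
        (transvectionPerm_mem_transvectionGroup (add_mem hw (add_mem hw' hu))), ?_, ?_⟩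
    · simp only [Perm.mul_apply, transvectionPerm_apply]
      rw [tvec_of_phi_eq_zero hu₁, tvec_of_phi_eq_zero hu₂]
    · simp only [Perm.mul_apply, transvectionPerm_apply]
      rw [tvec_add_of_phi_eq_one hwu, tvec_add_of_phi_eq_one hu']
  · refine ⟨transvectionPerm (w + w'), transvectionPerm_mem_transvectionGroup (add_mem hw hw'),
      tvec_of_phi_eq_zero ?_, tvec_add_of_phi_eq_one hww'⟩
    rw [phi_add_right, h, h']
    decide

end Transitivity

def pairsPerp (m k : ℕ) : AddSubgroup (Vm m) where
  carrier := {v | ∀ i : Fin m, i.val < k → v (.inl i) = 0 ∧ v (.inr i) = 0}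
  add_mem' hu hv i hi := by simp [(hu i hi).1, (hu i hi).2, (hv i hi).1, (hv i hi).2]
  zero_mem' _ _ := ⟨rfl, rfl⟩
  neg_mem' hv i hi := by simp [(hv i hi).1, (hv i hi).2]

lemma mem_pairsPerp_zero (v : Vm m) : v ∈ pairsPerp m 0 :=
  fun _ hi => absurd hi (Nat.not_lt_zero _)

lemma eVec_mem_pairsPerp {k : ℕ} {i : Fin m} (hi : k ≤ i.val) : eVec i ∈ pairsPerp m k :=
  fun j hj => by
    have hji : j ≠ i := fun hji => by subst hji; omega
    simp [eVec, hji]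

lemma fVec_mem_pairsPerp {k : ℕ} {i : Fin m} (hi : k ≤ i.val) : fVec i ∈ pairsPerp m k :=
  fun j hj => by
    have hji : j ≠ i := fun hji => by subst hji; omega
    simp [fVec, hji]

lemma exists_phi_eq_one_of_mem_pairsPerp {k : ℕ} {v : Vm m} (hv : v ∈ pairsPerp m k)
    (hv0 : v ≠ 0) : ∃ z ∈ pairsPerp m k, phi m v z = 1 := by
  obtain ⟨j, hj⟩ := Function.ne_iff.mp hv0
  have hj1 : v j = 1 := (zmod_two_eq_zero_or_eq_one _).resolve_left hj
  rcases j with i | i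
  · have hi : k ≤ i.val := not_lt.mp fun hi => hj (hv i hi).1
    exact ⟨fVec i, fVec_mem_pairsPerp hi, by rw [phi_comm, phi_fVec, hj1]⟩
  · have hi : k ≤ i.val := not_lt.mp fun hi => hj (hv i hi).2
    exact ⟨eVec i, eVec_mem_pairsPerp hi, by rw [phi_comm, phi_eVec, hj1]⟩

def FixesPairs (k : ℕ) (g : Perm (Vm m)) : Prop :=
  ∀ i : Fin m, i.val < k → g (eVec i) = eVec i ∧ g (fVec i) = fVec i

lemma FixesPairs.mul {k : ℕ} {g h : Perm (Vm m)} (hg : FixesPairs k g) (hh : FixesPairs k h) :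
    FixesPairs k (g * h) := fun i hi => by
  simp only [Perm.mul_apply, (hh i hi).1, (hh i hi).2, (hg i hi).1, (hg i hi).2, and_self]

lemma fixesPairs_of_mem_transvectionGroup {k : ℕ} {τ : Perm (Vm m)}
    (hτ : τ ∈ transvectionGroup (pairsPerp m k)) : FixesPairs k τ := fun i hi =>
  ⟨transvectionGroup_le_stabilizer (fun c hc => by rw [phi_eVec]; exact (hc i hi).2) hτ,
    transvectionGroup_le_stabilizer (fun c hc => by rw [phi_fVec]; exact (hc i hi).1) hτ⟩

lemma apply_mem_pairsPerp {k : ℕ} {g : Perm (Vm m)} (hg : g ∈ symplecticPerms m)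
    (hfix : FixesPairs k g) {v : Vm m} (hv : v ∈ pairsPerp m k) : g v ∈ pairsPerp m k :=
  fun i hi => by
    rw [← phi_fVec i (g v), ← phi_eVec i (g v), ← (hfix i hi).1, ← (hfix i hi).2, hg, hg,
      phi_fVec, phi_eVec]
    exact hv i hi

lemma exists_fixesPairs_succ {k : ℕ} (hk : k < m) {g : Perm (Vm m)}
    (hg : g ∈ symplecticPerms m) (hfix : FixesPairs k g) :
    ∃ τ ∈ transvectionGroup (pairsPerp m k), FixesPairs (k + 1) (τ * g) := by
  set κ : Fin m := ⟨k, hk⟩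
  have heW : eVec κ ∈ pairsPerp m k := eVec_mem_pairsPerp le_rfl
  have hfW : fVec κ ∈ pairsPerp m k := fVec_mem_pairsPerp le_rfl
  have hsymp {τ} (hτ : τ ∈ transvectionGroup (pairsPerp m k)) : τ * g ∈ symplecticPerms m :=
    mul_mem (transvectionGroup_le_symplecticPerms _ hτ) hg
  have hge : g (eVec κ) ≠ 0 := fun h0 => by
    simpa [h0, phi_zero_left, phi_eVec_fVec] using hg (eVec κ) (fVec κ)
  have he0 : eVec κ ≠ 0 := fun h0 => by simpa [h0, phi_zero_left] using phi_eVec_fVec κ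
  obtain ⟨τ₁, hτ₁, h₁⟩ := exists_mem_transvectionGroup_apply_eq
    (fun _ => exists_phi_eq_one_of_mem_pairsPerp) (apply_mem_pairsPerp hg hfix heW) heW hge he0
  have hfix₁ : FixesPairs k (τ₁ * g) := (fixesPairs_of_mem_transvectionGroup hτ₁).mul hfix
  have hφ : phi m (eVec κ) ((τ₁ * g) (fVec κ)) = 1 := by
    rw [← h₁, ← Perm.mul_apply, hsymp hτ₁, phi_eVec_fVec]
  obtain ⟨τ₂, hτ₂, h₂e, h₂f⟩ := exists_mem_transvectionGroup_fix_apply_eq heW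
    (apply_mem_pairsPerp (hsymp hτ₁) hfix₁ hfW) hfW hφ (phi_eVec_fVec κ)
  refine ⟨τ₂ * τ₁, mul_mem hτ₂ hτ₁, fun i hi => ?_⟩
  rcases Nat.lt_succ_iff_lt_or_eq.mp hi with hi | hi
  · exact ((fixesPairs_of_mem_transvectionGroup (mul_mem hτ₂ hτ₁)).mul hfix) i hi
  · obtain rfl : i = κ := Fin.ext hi
    rw [mul_assoc]
    exact ⟨(congrArg τ₂ h₁).trans h₂e, h₂f⟩

lemma exists_mem_transvectionGroup_fixesPairs {g : Perm (Vm m)} (hg : g ∈ symplecticPerms m) :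
    ∀ k ≤ m, ∃ τ ∈ transvectionGroup ⊤, FixesPairs k (τ * g)
  | 0, _ => ⟨1, one_mem _, fun _ hi => absurd hi (Nat.not_lt_zero _)⟩
  | k + 1, hk => by
    obtain ⟨τ, hτ, hfix⟩ := exists_mem_transvectionGroup_fixesPairs hg k (by omega)
    obtain ⟨σ, hσ, hfix'⟩ := exists_fixesPairs_succ hk
      (mul_mem (transvectionGroup_le_symplecticPerms _ hτ) hg) hfix
    exact ⟨σ * τ, mul_mem (transvectionGroup_mono le_top hσ) hτ, by rwa [mul_assoc]⟩

lemma eq_one_of_fixesPairs {g : Perm (Vm m)} (hg : g ∈ symplecticPerms m)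
    (hfix : FixesPairs m g) : g = 1 :=
  Equiv.ext fun v => eq_of_phi_eVec_of_phi_fVec
    (fun i => by simpa [(hfix i i.isLt).1] using hg (eVec i) v)
    (fun i => by simpa [(hfix i i.isLt).2] using hg (fVec i) v)

theorem symplecticPerms_le_transvectionGroup : symplecticPerms m ≤ transvectionGroup ⊤ :=
  fun g hg => by
    obtain ⟨τ, hτ, hfix⟩ := exists_mem_transvectionGroup_fixesPairs hg m le_rfl
    have hτg := eq_one_of_fixesPairs (mul_mem (transvectionGroup_le_symplecticPerms _ hτ) hg) hfix
    rw [eq_inv_of_mul_eq_one_right hτg]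
    exact inv_mem hτ

def moves (m : ℕ) : Set (Perm (Vm m)) :=
  {g | ∃ a b : Vm m, a ≠ b ∧ ∀ p : Vm m, g p = piMove m a b p}

lemma transvectionGroup_le_closure_moves :
    transvectionGroup ⊤ ≤ Subgroup.closure (moves m) := by
  refine (Subgroup.closure_le _).mpr ?_
  rintro _ ⟨c, -, rfl⟩
  rcases eq_or_ne c 0 with rfl | hc
  · have : transvectionPerm (0 : Vm m) = 1 := by ext; simp [tvec]
    exact this ▸ one_mem _
  obtain ⟨z, -, hz⟩ := exists_phi_eq_one_of_mem_pairsPerp (mem_pairsPerp_zero c) hc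
  refine Subgroup.subset_closure ⟨z, z + c, fun h => hc (left_eq_add.mp h), fun p => ?_⟩
  have hzc : phi m z (z + c) = 1 := by rw [phi_add_right, phi_self, phi_comm, hz, zero_add]
  rw [piMove, hzc, ← add_assoc, vec_add_self, zero_add, CharTwo.add_self_eq_zero, zero_smul,
    add_zero, transvectionPerm_apply]

lemma addRight_mem_closure_moves (w : Vm m) : Equiv.addRight w ∈ Subgroup.closure (moves m) := by
  rcases eq_or_ne w 0 with rfl | hw
  · exact (Equiv.addRight_zero (α := Vm m)) ▸ one_mem _
  have hmove : Equiv.addRight w * transvectionPerm w ∈ moves m :=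
    ⟨0, w, hw.symm, fun p => by simp [piMove, phi_zero_left]⟩
  rw [← mul_inv_cancel_right (Equiv.addRight w) (transvectionPerm w)]
  exact mul_mem (Subgroup.subset_closure hmove)
    (inv_mem (transvectionGroup_le_closure_moves (transvectionPerm_mem_transvectionGroup trivial)))

def affineSymplectic (m : ℕ) : Submonoid (Perm (Vm m)) where
  carrier := {g | ∃ (h : Vm m → Vm m) (w : Vm m), IsLinearMap (ZMod 2) h ∧
    (∀ u v : Vm m, phi m (h u) (h v) = phi m u v) ∧ ∀ p : Vm m, g p = h p + w}
  one_mem' := ⟨id, 0, LinearMap.id.isLinear, fun _ _ => rfl, fun p => (add_zero p).symm⟩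
  mul_mem' := by
    rintro g₁ g₂ ⟨h₁, w₁, hl₁, hs₁, hg₁⟩ ⟨h₂, w₂, hl₂, hs₂, hg₂⟩
    refine ⟨h₁ ∘ h₂, h₁ w₂ + w₁, ((hl₁.mk' _).comp (hl₂.mk' _)).isLinear,
      fun u v => (hs₁ _ _).trans (hs₂ u v), fun p => ?_⟩
    simp only [Perm.mul_apply, hg₁, hg₂, hl₁.map_add, Function.comp_apply, add_assoc]

lemma moves_subset_affineSymplectic : moves m ⊆ affineSymplectic m := by
  rintro g ⟨a, b, -, hg⟩
  exact ⟨tvec m (a + b), _, isLinearMap_tvec _, phi_tvec_tvec _, hg⟩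

end

theorem stmt_10_general (m : ℕ) :
    (Subgroup.closure {g : Equiv.Perm (Vm m) |
        ∃ a b : Vm m, a ≠ b ∧ ∀ p : Vm m, g p = piMove m a b p} :
      Set (Equiv.Perm (Vm m))) =
      {g : Equiv.Perm (Vm m) |
        ∃ (h : Vm m → Vm m) (w : Vm m),
          IsLinearMap (ZMod 2) h ∧
          (∀ u v : Vm m, phi m (h u) (h v) = phi m u v) ∧
          ∀ p : Vm m, g p = h p + w} := by
  change (Subgroup.closure (moves m) : Set (Perm (Vm m))) = affineSymplectic m
  refine Set.Subset.antisymm ?_ ?_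
  · rw [← Subgroup.coe_toSubmonoid, Subgroup.closure_toSubmonoid_of_finite]
    exact Submonoid.closure_le.mpr moves_subset_affineSymplectic
  · rintro g ⟨h, w, -, hh, hg⟩
    have hsymp : g.trans (Equiv.subRight w) ∈ symplecticPerms m := fun u v => by
      simpa [hg] using hh u v
    have hdecomp : g = Equiv.addRight w * g.trans (Equiv.subRight w) := by ext p; simp
    rw [hdecomp]
    exact mul_mem (addRight_mem_closure_moves w)
      (transvectionGroup_le_closure_moves (symplecticPerms_le_transvectionGroup hsymp))

theorem stmt_10 (m : ℕ) (hm : 3 ≤ m) :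
    (Subgroup.closure {g : Equiv.Perm (Vm m) |
        ∃ a b : Vm m, a ≠ b ∧ ∀ p : Vm m, g p = piMove m a b p} :
      Set (Equiv.Perm (Vm m))) =
      {g : Equiv.Perm (Vm m) |
        ∃ (h : Vm m → Vm m) (w : Vm m),
          IsLinearMap (ZMod 2) h ∧
          (∀ u v : Vm m, phi m (h u) (h v) = phi m u v) ∧
          ∀ p : Vm m, g p = h p + w} :=
  stmt_10_general m
end

section
/- Let m ≥ 3. A vector α in the space of functions V → 𝔽₂ belongs to the code C^a if and only if its support S = {v ∈ V : α(v) ≠ 0} satisfies: |S| is even, Σ_{v∈S} v = 0 in 𝔽₂^{2m}, and Σ_{v∈S} θ₀(v) = 0 in 𝔽₂. -/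
open Matrix

/-- The point set `V^ε = {v : θ₀(v) = ε}` as a subtype. -/
abbrev Veps (m : ℕ) (ε : ZMod 2) := {v : Vm m // theta0 m v = ε}

/-- The characteristic vector of a finite set. -/
def chi {α : Type*} [DecidableEq α] (S : Finset α) : α → ZMod 2 :=
  fun x => if x ∈ S then 1 else 0

/-- The code `C^ε`: the `𝔽₂`-span of the characteristic vectors of
4-element subsets of `V^ε` summing to zero. -/
def Ceps (m : ℕ) (ε : ZMod 2) : Submodule (ZMod 2) (Veps m ε → ZMod 2) :=
  Submodule.span (ZMod 2)
    {w | ∃ S : Finset (Veps m ε), S.card = 4 ∧ (∑ x ∈ S, (x : Vm m)) = 0 ∧ w = chi S}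

/-- The code `C^a`: the `𝔽₂`-span of the characteristic vectors of
4-element subsets of `V` summing to zero whose `θ₀`-values sum to zero. -/
def Ca (m : ℕ) : Submodule (ZMod 2) (Vm m → ZMod 2) :=
  Submodule.span (ZMod 2)
    {w | ∃ T : Finset (Vm m), T.card = 4 ∧ (∑ x ∈ T, x) = 0 ∧
         (∑ x ∈ T, theta0 m x) = 0 ∧ w = chi T}


/-!
The three conditions on the support of `w` say that the syndrome `Σₓ w(x) • (1, x, θ₀ x)` of `w`
vanishes; this map is linear and kills every generator, so `C^a` lies in its kernel.

Conversely, let `w` have zero syndrome. If its support has at most four points it is empty or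
the support of a generator. Otherwise pick support points `a, b, x, y` with `a + b ≠ x + y`.
Since `φ` is nondegenerate there is a `c` with `φ(a + b, c) = φ(a, b)` and
`φ(x + y, c) = φ(x, y)`; then `χ{a, b} + χ{c, a + b + c}` and `χ{x, y} + χ{c, x + y + c}` lie in
`C^a`, each being `0` or the characteristic vector of a 4-set with zero sum and zero `θ₀`-sum.
Adding both to `w` trades the four points `a, b, x, y` for the two points `a + b + c`,
`x + y + c`, and induction on the weight finishes the proof.
-/

open Finset

lemma fMat_eq_fromBlocks (m : ℕ) : fMat m = fromBlocks 0 1 1 0 := by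
  simp [fMat, eMat, fromBlocks_transpose, fromBlocks_add]

lemma fMat_mul_self (m : ℕ) : fMat m * fMat m = 1 := by
  simp [fMat_eq_fromBlocks, fromBlocks_multiply, fromBlocks_one]

lemma phi_fMat_mulVec (m : ℕ) (u d : Vm m) : phi m u (fMat m *ᵥ d) = u ⬝ᵥ d := by
  rw [phi, mulVec_mulVec, fMat_mul_self, one_mulVec]

lemma theta0_add (m : ℕ) (u v : Vm m) :
    theta0 m (u + v) = theta0 m u + theta0 m v + phi m u v := by
  simp only [theta0, phi, fMat, add_mulVec, mulVec_add, dotProduct_add, add_dotProduct,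
    dotProduct_transpose_mulVec]
  ring

lemma exists_dotProduct_eq_of_ne {ι : Type*} [Fintype ι] [DecidableEq ι] {u v : ι → ZMod 2}
    (hu : u ≠ 0) (hv : v ≠ 0) (huv : u ≠ v) (α β : ZMod 2) :
    ∃ d, u ⬝ᵥ d = α ∧ v ⬝ᵥ d = β := by
  obtain ⟨k, hk⟩ := Function.ne_iff.mp hu
  obtain ⟨l, hl⟩ := Function.ne_iff.mp hv
  obtain ⟨j, hj⟩ := Function.ne_iff.mp huv
  -- the values of `(u ⬝ᵥ ·, v ⬝ᵥ ·)` at `single k 1`, `single l 1`, `single j 1` span `𝔽₂²`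
  have hspan : ∀ a b c d x y α β : ZMod 2, a ≠ 0 → b ≠ 0 → c ≠ d → ∃ n₁ n₂ n₃ : ZMod 2,
      a * n₁ + x * n₂ + c * n₃ = α ∧ y * n₁ + b * n₂ + d * n₃ = β := by
    decide
  obtain ⟨n₁, n₂, n₃, h₁, h₂⟩ := hspan _ _ _ _ _ _ α β hk hl hj
  exact ⟨Pi.single k n₁ + Pi.single l n₂ + Pi.single j n₃, by simpa [dotProduct_add] using h₁,
    by simpa [dotProduct_add] using h₂⟩

lemma exists_phi_eq_of_ne {m : ℕ} {p q : Vm m} (hp : p ≠ 0) (hq : q ≠ 0) (hpq : p ≠ q)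
    (α β : ZMod 2) : ∃ c, phi m p c = α ∧ phi m q c = β := by
  obtain ⟨d, hpd, hqd⟩ := exists_dotProduct_eq_of_ne hp hq hpq α β
  exact ⟨fMat m *ᵥ d, by rwa [phi_fMat_mulVec], by rwa [phi_fMat_mulVec]⟩

lemma ZMod.eq_one_of_ne_zero_two {z : ZMod 2} (h : z ≠ 0) : z = 1 := by
  revert z; decide

lemma sum_smul_eq_sum_filter_ne_zero {α : Type*} [Fintype α] {M : Type*} [AddCommMonoid M]
    [Module (ZMod 2) M] (w : α → ZMod 2) (g : α → M) :
    ∑ x, w x • g x = ∑ x with w x ≠ 0, g x := by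
  rw [Finset.sum_filter]
  refine Finset.sum_congr rfl fun x _ => ?_
  split_ifs with hx
  · rw [ZMod.eq_one_of_ne_zero_two hx, one_smul]
  · rw [not_not.mp hx, zero_smul]

lemma ZModModule.add_eq_zero_iff_eq {G : Type*} [AddCommGroup G] [Module (ZMod 2) G] {x y : G} :
    x + y = 0 ↔ x = y := by
  rw [add_eq_zero_iff_eq_neg, ZModModule.neg_eq_self]

section Chi

variable {α : Type*} [DecidableEq α]

lemma chi_union_of_disjoint {S T : Finset α} (h : Disjoint S T) :
    chi (S ∪ T) = chi S + chi T := by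
  ext x
  by_cases hS : x ∈ S
  · simp [chi, hS, Finset.disjoint_left.mp h hS]
  · simp [chi, hS]

lemma chi_singleton (a : α) : chi {a} = Pi.single a 1 := by
  ext x
  simp [chi, Pi.single_apply]

lemma chi_pair {a b : α} (h : a ≠ b) : chi {a, b} = Pi.single a 1 + Pi.single b 1 := by
  rw [← Finset.singleton_union, chi_union_of_disjoint (by simpa using h), chi_singleton,
    chi_singleton]

lemma chi_filter_ne_zero [Fintype α] (w : α → ZMod 2) : chi {x | w x ≠ 0} = w := by
  ext x
  by_cases hx : w x = 0
  · simp [chi, hx]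
  · simp [chi, ZMod.eq_one_of_ne_zero_two hx]

lemma filter_chi_ne_zero [Fintype α] (T : Finset α) : ({x | chi T x ≠ 0} : Finset α) = T := by
  ext x
  by_cases hx : x ∈ T <;> simp [chi, hx]

end Chi

section Hamming

variable {ι : Type*} [Fintype ι] [DecidableEq ι]

lemma hammingNorm_add_le {β : Type*} [AddZeroClass β] [DecidableEq β] (u v : ι → β) :
    hammingNorm (u + v) ≤ hammingNorm u + hammingNorm v := by
  refine (Finset.card_le_card fun x hx => ?_).trans (Finset.card_union_le _ _)
  by_cases hu : u x = 0 <;> simp_all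

lemma hammingNorm_chi (T : Finset ι) : hammingNorm (chi T) = #T := by
  rw [hammingNorm, filter_chi_ne_zero]

lemma hammingNorm_add_chi_add_card {w : ι → ZMod 2} {T : Finset ι}
    (hT : T ⊆ ({x | w x ≠ 0} : Finset ι)) :
    hammingNorm (w + chi T) + #T = hammingNorm w := by
  have hsupp : ({x | (w + chi T) x ≠ 0} : Finset ι) = ({x | w x ≠ 0} : Finset ι) \ T := by
    ext x
    simp only [Finset.mem_filter, Finset.mem_sdiff, Finset.mem_univ, true_and, Pi.add_apply]
    by_cases hx : x ∈ T
    · have hwx : w x ≠ 0 := by simpa using hT hx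
      simp [chi, hx, ZMod.eq_one_of_ne_zero_two hwx, ZModModule.add_self]
    · simp [chi, hx]
  rw [hammingNorm, hammingNorm, hsupp, Finset.card_sdiff_add_card_eq_card hT]

end Hamming

lemma exists_four_mem_add_ne_add {G : Type*} [AddCommGroup G] [DecidableEq G] {S : Finset G}
    (hS : 5 ≤ #S) : ∃ a ∈ S, ∃ b ∈ S, ∃ x ∈ S, ∃ y ∈ S,
      a ≠ b ∧ a ≠ x ∧ a ≠ y ∧ b ≠ x ∧ b ≠ y ∧ x ≠ y ∧ a + b ≠ x + y := by
  obtain ⟨a, ha, b, hb, x, hx, hab, hax, hbx⟩ := Finset.two_lt_card.mp (by omega : 2 < #S)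
  have hcard : 0 < #(S \ {a, b, x, a + b - x}) := by
    have := Finset.le_card_sdiff {a, b, x, a + b - x} S
    have := Finset.card_le_four (a := a) (b := b) (c := x) (d := a + b - x)
    omega
  obtain ⟨y, hy⟩ := Finset.card_pos.mp hcard
  simp only [Finset.mem_sdiff, Finset.mem_insert, Finset.mem_singleton, not_or] at hy
  obtain ⟨hyS, hya, hyb, hyx, hy⟩ := hy
  refine ⟨a, ha, b, hb, x, hx, y, hyS, hab, hax, Ne.symm hya, hbx, Ne.symm hyb, Ne.symm hyx, ?_⟩
  exact fun h => hy (by rw [h]; abel)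

section Code

variable {m : ℕ}

lemma chi_mem_Ca {T : Finset (Vm m)} (hT : #T = 4) (hsum : ∑ x ∈ T, x = 0)
    (hθ : ∑ x ∈ T, theta0 m x = 0) : chi T ∈ Ca m :=
  Submodule.subset_span ⟨T, hT, hsum, hθ, rfl⟩

lemma chi_pair_add_chi_pair_mem_Ca {a b c d : Vm m} (hab : a ≠ b) (hcd : c ≠ d)
    (hsum : a + b = c + d) (hθ : theta0 m a + theta0 m b = theta0 m c + theta0 m d) :
    chi {a, b} + chi {c, d} ∈ Ca m := by
  by_cases hac : a = c
  · obtain rfl := hac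
    obtain rfl := add_left_cancel hsum
    rw [ZModModule.add_self]
    exact zero_mem _
  by_cases had : a = d
  · obtain rfl := had
    obtain rfl : b = c := add_left_cancel (hsum.trans (add_comm c a))
    rw [Finset.pair_comm, ZModModule.add_self]
    exact zero_mem _
  have hbc : b ≠ c := fun h => had (add_right_cancel (by rw [hsum, h, add_comm]))
  have hbd : b ≠ d := fun h => hac (add_right_cancel (by rw [hsum, h]))
  have hdisj : Disjoint ({a, b} : Finset (Vm m)) {c, d} := by
    simp [Ne.symm hac, Ne.symm had, Ne.symm hbc, Ne.symm hbd]
  rw [← chi_union_of_disjoint hdisj]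
  refine chi_mem_Ca ?_ ?_ ?_
  · rw [Finset.card_union_of_disjoint hdisj, Finset.card_pair hab, Finset.card_pair hcd]
  · rw [Finset.sum_union hdisj, Finset.sum_pair hab, Finset.sum_pair hcd, hsum,
      ZModModule.add_self]
  · rw [Finset.sum_union hdisj, Finset.sum_pair hab, Finset.sum_pair hcd, hθ,
      ZModModule.add_self]

/-- The pair `{c, a + b + c}` has the same sum as `{a, b}`, and the same `θ₀`-sum because
`θ₀(c) + θ₀(a + b + c) = θ₀(a) + θ₀(b) + φ(a, b) + φ(a + b, c)`. -/
lemma chi_pair_add_chi_pair_mem_Ca_of_phi {a b c : Vm m} (hab : a ≠ b)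
    (hc : phi m (a + b) c = phi m a b) : chi {a, b} + chi {c, a + b + c} ∈ Ca m := by
  refine chi_pair_add_chi_pair_mem_Ca hab (fun h => hab ?_) ?_ ?_
  · exact ZModModule.add_eq_zero_iff_eq.mp (add_eq_right.mp h.symm)
  · rw [add_comm c, add_assoc, ZModModule.add_self, add_zero]
  · rw [theta0_add, theta0_add, hc]
    grind

variable (m) in
def syndrome : (Vm m → ZMod 2) →ₗ[ZMod 2] ZMod 2 × Vm m × ZMod 2 :=
  Fintype.linearCombination (ZMod 2) fun x => ((1 : ZMod 2), x, theta0 m x)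

lemma syndrome_apply (w : Vm m → ZMod 2) :
    syndrome m w =
      ((#{x | w x ≠ 0} : ZMod 2), ∑ x with w x ≠ 0, x, ∑ x with w x ≠ 0, theta0 m x) := by
  rw [syndrome, Fintype.linearCombination_apply, sum_smul_eq_sum_filter_ne_zero]
  ext <;> simp [Prod.fst_sum, Prod.snd_sum]

lemma Ca_le_ker_syndrome : Ca m ≤ LinearMap.ker (syndrome m) := by
  rw [Ca, Submodule.span_le]
  rintro _ ⟨T, hT, hsum, hθ, rfl⟩
  rw [SetLike.mem_coe, LinearMap.mem_ker, syndrome_apply, filter_chi_ne_zero, hT, hsum, hθ]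
  rfl

lemma chi_mem_Ca_of_card_le_four {S : Finset (Vm m)} (hS : #S ≤ 4) (heven : Even #S)
    (hsum : ∑ x ∈ S, x = 0) (hθ : ∑ x ∈ S, theta0 m x = 0) : chi S ∈ Ca m := by
  obtain h | h | h : #S = 0 ∨ #S = 2 ∨ #S = 4 := by obtain ⟨k, hk⟩ := heven; omega
  · rw [Finset.card_eq_zero.mp h]
    convert zero_mem (Ca m)
    ext
    simp [chi]
  · obtain ⟨a, b, hab, rfl⟩ := Finset.card_eq_two.mp h
    rw [Finset.sum_pair hab] at hsum
    exact absurd (ZModModule.add_eq_zero_iff_eq.mp hsum) hab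
  · exact chi_mem_Ca h hsum hθ

lemma exists_mem_Ca_hammingNorm_add_lt {w : Vm m → ZMod 2} (hw : 5 ≤ hammingNorm w) :
    ∃ q ∈ Ca m, hammingNorm (w + q) < hammingNorm w := by
  obtain ⟨a, ha, b, hb, x, hx, y, hy, hab, hax, hay, hbx, hby, hxy, hne⟩ :=
    exists_four_mem_add_ne_add (S := {x | w x ≠ 0}) hw
  simp only [Finset.mem_filter, Finset.mem_univ, true_and] at ha hb hx hy
  obtain ⟨c, hc₁, hc₂⟩ := exists_phi_eq_of_ne (p := a + b) (q := x + y)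
    (fun h => hab (ZModModule.add_eq_zero_iff_eq.mp h))
    (fun h => hxy (ZModModule.add_eq_zero_iff_eq.mp h)) hne (phi m a b) (phi m x y)
  refine ⟨(chi {a, b} + chi {c, a + b + c}) + (chi {x, y} + chi {c, x + y + c}),
    add_mem (chi_pair_add_chi_pair_mem_Ca_of_phi hab hc₁)
      (chi_pair_add_chi_pair_mem_Ca_of_phi hxy hc₂), ?_⟩
  have hcab : c ≠ a + b + c := fun h =>
    hab (ZModModule.add_eq_zero_iff_eq.mp (add_eq_right.mp h.symm))
  have hcxy : c ≠ x + y + c := fun h =>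
    hxy (ZModModule.add_eq_zero_iff_eq.mp (add_eq_right.mp h.symm))
  have hd : a + b + c ≠ x + y + c := fun h => hne (add_right_cancel h)
  have hdisj : Disjoint ({a, b} : Finset (Vm m)) {x, y} := by
    simp [hax.symm, hay.symm, hbx.symm, hby.symm]
  -- `c` occurs in both pairs and cancels: `a, b, x, y` leave the support, `a + b + c` and
  -- `x + y + c` may enter it
  have hcancel : (chi {a, b} + chi {c, a + b + c}) + (chi {x, y} + chi {c, x + y + c})
      = chi ({a, b} ∪ {x, y}) + chi {a + b + c, x + y + c} := by
    rw [chi_union_of_disjoint hdisj, chi_pair hab, chi_pair hcab, chi_pair hxy, chi_pair hcxy,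
      chi_pair hd]
    linear_combination CharTwo.add_self_eq_zero (Pi.single c 1 : Vm m → ZMod 2)
  have hsupp : {a, b} ∪ {x, y} ⊆ ({x | w x ≠ 0} : Finset (Vm m)) := by
    simp [Finset.insert_subset_iff, ha, hb, hx, hy]
  rw [hcancel, ← add_assoc, ← hammingNorm_add_chi_add_card hsupp]
  calc hammingNorm (w + chi ({a, b} ∪ {x, y}) + chi {a + b + c, x + y + c})
      ≤ hammingNorm (w + chi ({a, b} ∪ {x, y})) + 2 :=
        (hammingNorm_add_le _ _).trans (by rw [hammingNorm_chi]; gcongr; exact Finset.card_le_two)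
    _ < hammingNorm (w + chi ({a, b} ∪ {x, y})) + #({a, b} ∪ {x, y}) := by
        rw [Finset.card_union_of_disjoint hdisj, Finset.card_pair hab, Finset.card_pair hxy]
        omega

lemma mem_Ca_of_syndrome_eq_zero (w : Vm m → ZMod 2) (hw : syndrome m w = 0) : w ∈ Ca m := by
  induction hn : hammingNorm w using Nat.strong_induction_on generalizing w with
  | _ n ih =>
  rcases lt_or_ge n 5 with hlt | hge
  · rw [syndrome_apply, Prod.mk_eq_zero, Prod.mk_eq_zero, ZMod.natCast_eq_zero_iff_even] at hw
    rw [← chi_filter_ne_zero w]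
    exact chi_mem_Ca_of_card_le_four (by rw [hammingNorm] at hn; omega) hw.1 hw.2.1 hw.2.2
  · obtain ⟨q, hq, hlt⟩ := exists_mem_Ca_hammingNorm_add_lt (hn ▸ hge)
    rw [← Submodule.add_mem_iff_left _ hq]
    refine ih _ (hn ▸ hlt) _ ?_ rfl
    rw [map_add, hw, LinearMap.mem_ker.mp (Ca_le_ker_syndrome hq), add_zero]

lemma Ca_eq_ker_syndrome : Ca m = LinearMap.ker (syndrome m) :=
  le_antisymm Ca_le_ker_syndrome fun w hw => mem_Ca_of_syndrome_eq_zero w hw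

end Code

theorem stmt_13_general (m : ℕ) (w : Vm m → ZMod 2) :
    w ∈ Ca m ↔
      Even (Finset.univ.filter fun x => w x ≠ 0).card ∧
      (∑ x ∈ Finset.univ.filter fun x => w x ≠ 0, x) = 0 ∧
      (∑ x ∈ Finset.univ.filter fun x => w x ≠ 0, theta0 m x) = 0 := by
  rw [Ca_eq_ker_syndrome, LinearMap.mem_ker, syndrome_apply, Prod.mk_eq_zero, Prod.mk_eq_zero,
    ZMod.natCast_eq_zero_iff_even]

theorem stmt_13 (m : ℕ) (hm : 3 ≤ m) (w : Vm m → ZMod 2) :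
    w ∈ Ca m ↔
      Even (Finset.univ.filter fun x => w x ≠ 0).card ∧
      (∑ x ∈ Finset.univ.filter fun x => w x ≠ 0, x) = 0 ∧
      (∑ x ∈ Finset.univ.filter fun x => w x ≠ 0, theta0 m x) = 0 :=
  stmt_13_general m w
end
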